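/- arXiv:2303.01728 — 2 statements merged into one kernel-verified Lean document; each statement's English description precedes it below -/
import Mathlib

section
/- If the state distribution discrepancy between any two policies π and π' satisfies ‖d_π − d_{π'}‖₁ ≤ (γ/(1−γ)) E_{s∼d_π}‖π(·|s) − π'(·|s)‖₁, then for the mixed behavior policy π_b = T·π_t + (1−T)·π_s one has ‖d_{π_b} − d_{π_s}‖₁ ≤ (βγ/(1−γ)) E_{s∼d_{π_b}}‖π_t(·|s) − π_s(·|s)‖₁, where β = E_{s∼d_{π_b}}[T(s)‖π_t(·|s)−π_s(·|s)‖₁] / E_{s∼d_{π_b}}‖π_t(·|s)−π_s(·|s)‖₁. -/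
open Finset

/-- Theorem 3.2 of the paper: assuming the distribution-discrepancy
lemma `‖d_π − d_π'‖₁ ≤ (γ/(1−γ)) E_{s∼d_π}‖π(·|s) − π'(·|s)‖₁` for all policy pairs,
for the mixed behavior policy `πb = T·πt + (1−T)·πs` we have
`‖d_{πb} − d_{πs}‖₁ ≤ (βγ/(1−γ)) E_{s∼d_{πb}}‖πt(·|s) − πs(·|s)‖₁`,
where `β` is the weighted expected intervention rate. -/
theorem state_distribution_discrepancy_intervention
    {S A : Type*} [Fintype S] [Fintype A]
    (γ : ℝ) (hγ0 : 0 < γ) (hγ1 : γ < 1)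
    (dπ : (S → A → ℝ) → S → ℝ)
    (hlemma : ∀ π π' : S → A → ℝ,
      (∑ s : S, |dπ π s - dπ π' s|) ≤
        γ / (1 - γ) * ∑ s : S, dπ π s * ∑ a : A, |π s a - π' s a|)
    (πt πs : S → A → ℝ) (T : S → ℝ)
    (hT : ∀ s, T s = 0 ∨ T s = 1)
    (πb : S → A → ℝ)
    (hπb : ∀ s a, πb s a = T s * πt s a + (1 - T s) * πs s a)
    (β : ℝ)
    (hβ : β = (∑ s : S, dπ πb s * (T s * ∑ a : A, |πt s a - πs s a|)) /
              (∑ s : S, dπ πb s * ∑ a : A, |πt s a - πs s a|))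
    (hden : 0 < ∑ s : S, dπ πb s * ∑ a : A, |πt s a - πs s a|) :
    (∑ s : S, |dπ πb s - dπ πs s|) ≤
      β * γ / (1 - γ) * ∑ s : S, dπ πb s * ∑ a : A, |πt s a - πs s a| := by
  have key : ∀ s, (∑ a : A, |πb s a - πs s a|) = T s * ∑ a : A, |πt s a - πs s a| := by
    intro s
    rcases hT s with h | h
    · simp [hπb, h]
    · simp [hπb, h]
  have h1 := hlemma πb πs
  simp only [key] at h1
  have hnum : (∑ s : S, dπ πb s * (T s * ∑ a : A, |πt s a - πs s a|)) =
      β * ∑ s : S, dπ πb s * ∑ a : A, |πt s a - πs s a| := by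
    rw [hβ, div_mul_cancel₀]
    exact ne_of_gt hden
  rw [hnum] at h1
  calc (∑ s : S, |dπ πb s - dπ πs s|) ≤ γ / (1 - γ) * (β * ∑ s : S, dπ πb s * ∑ a : A, |πt s a - πs s a|) := h1
    _ = β * γ / (1 - γ) * ∑ s : S, dπ πb s * ∑ a : A, |πt s a - πs s a| := by ring
end

section
/- The performance difference lemma: for any two policies π and π' in a finite discounted MDP, J(π) − J(π') = E_{trajectories τ∼π}[∑_{t=0}^∞ γ^t A^{π'}(s_t, a_t)], where A^{π'}(s,a) = Q^{π'}(s,a) − V^{π'}(s) is the advantage function of π'. -/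
open Finset

/-- performance difference lemma: in a finite discounted MDP,
`J(π) − J(π') = E_{τ∼π}[∑_t γ^t A^{π'}(s_t, a_t)]`, where
`A^{π'}(s,a) = Q^{π'}(s,a) − V^{π'}(s)`. The trajectory expectation is expressed
through the time-indexed state-action occupancy `ρ π t` of policy `π`, and
`Q^{π'}, V^{π'}` are characterized by their Bellman equations. -/
theorem performance_difference_lemma
    {S A : Type*} [Fintype S] [Fintype A]
    (γ : ℝ) (hγ0 : 0 < γ) (hγ1 : γ < 1)
    (P : S → A → S → ℝ) (R : S → A → ℝ) (d0 : S → ℝ)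
    (hP_nonneg : ∀ s a s', 0 ≤ P s a s') (hP_sum : ∀ s a, ∑ s' : S, P s a s' = 1)
    (hd0_nonneg : ∀ s, 0 ≤ d0 s) (hd0_sum : ∑ s : S, d0 s = 1)
    -- `ρ π t s a` is the probability that `(s_t, a_t) = (s, a)` under policy `π`
    (ρ : (S → A → ℝ) → ℕ → S → A → ℝ)
    (hρ0 : ∀ (π : S → A → ℝ) (s : S) (a : A), ρ π 0 s a = d0 s * π s a)
    (hρsucc : ∀ (π : S → A → ℝ) (t : ℕ) (s' : S) (a' : A),
      ρ π (t + 1) s' a' = (∑ s : S, ∑ a : A, ρ π t s a * P s a s') * π s' a')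
    -- the return of a policy is the discounted sum of expected rewards
    (J : (S → A → ℝ) → ℝ)
    (hJ : ∀ π : S → A → ℝ, J π = ∑' t : ℕ, γ ^ t * ∑ s : S, ∑ a : A, ρ π t s a * R s a)
    -- policies
    (π π' : S → A → ℝ)
    (hπ_nonneg : ∀ s a, 0 ≤ π s a) (hπ_sum : ∀ s, ∑ a : A, π s a = 1)
    (hπ'_nonneg : ∀ s a, 0 ≤ π' s a) (hπ'_sum : ∀ s, ∑ a : A, π' s a = 1)
    -- value functions of π' via their Bellman equations
    (Q' : S → A → ℝ) (V' : S → ℝ)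
    (hQ' : ∀ s a, Q' s a = R s a + γ * ∑ s' : S, P s a s' * V' s')
    (hV' : ∀ s, V' s = ∑ a : A, π' s a * Q' s a) :
    J π - J π' = ∑' t : ℕ, γ ^ t * ∑ s : S, ∑ a : A, ρ π t s a * (Q' s a - V' s) := by
  -- nonnegativity of occupancies
  have hnn : ∀ (p : S → A → ℝ), (∀ s a, 0 ≤ p s a) → ∀ t s a, 0 ≤ ρ p t s a := by
    intro p hp t
    induction t with
    | zero =>
      intro s a; rw [hρ0]; exact mul_nonneg (hd0_nonneg s) (hp s a)
    | succ t ih =>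
      intro s' a'; rw [hρsucc]
      exact mul_nonneg (Finset.sum_nonneg fun s _ => Finset.sum_nonneg fun a _ =>
        mul_nonneg (ih s a) (hP_nonneg s a s')) (hp s' a')
  -- total mass is 1
  have hmass : ∀ (p : S → A → ℝ), (∀ s, ∑ a : A, p s a = 1) →
      ∀ t, ∑ s : S, ∑ a : A, ρ p t s a = 1 := by
    intro p hp t
    induction t with
    | zero => simp [hρ0, ← Finset.mul_sum, hp, hd0_sum]
    | succ t ih =>
      have h1 : ∀ s' : S, ∑ a' : A, ρ p (t+1) s' a'
          = ∑ s : S, ∑ a : A, ρ p t s a * P s a s' := by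
        intro s'
        simp only [hρsucc, ← Finset.mul_sum, hp, mul_one]
      calc ∑ s' : S, ∑ a' : A, ρ p (t+1) s' a'
          = ∑ s' : S, ∑ s : S, ∑ a : A, ρ p t s a * P s a s' :=
            Finset.sum_congr rfl fun s' _ => h1 s'
        _ = ∑ s : S, ∑ a : A, ∑ s' : S, ρ p t s a * P s a s' := by
            rw [Finset.sum_comm]
            exact Finset.sum_congr rfl fun s _ => Finset.sum_comm
        _ = ∑ s : S, ∑ a : A, ρ p t s a := by
            simp [← Finset.mul_sum, hP_sum]
        _ = 1 := ih
  -- bound on occupancy-weighted sums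
  have hbound : ∀ (p : S → A → ℝ), (∀ s a, 0 ≤ p s a) → (∀ s, ∑ a : A, p s a = 1) →
      ∀ (f : S → A → ℝ) (t : ℕ),
      |∑ s : S, ∑ a : A, ρ p t s a * f s a| ≤ ∑ s : S, ∑ a : A, |f s a| := by
    intro p hpn hps f t
    set C := ∑ s : S, ∑ a : A, |f s a| with hC
    have hfC : ∀ s a, |f s a| ≤ C := by
      intro s a
      calc |f s a| ≤ ∑ a : A, |f s a| :=
            Finset.single_le_sum (f := fun a => |f s a|) (fun a _ => abs_nonneg _) (Finset.mem_univ a)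
        _ ≤ C := Finset.single_le_sum (f := fun s => ∑ a : A, |f s a|)
            (fun s _ => Finset.sum_nonneg fun a _ => abs_nonneg _) (Finset.mem_univ s)
    calc |∑ s : S, ∑ a : A, ρ p t s a * f s a|
        ≤ ∑ s : S, |∑ a : A, ρ p t s a * f s a| := Finset.abs_sum_le_sum_abs _ _
      _ ≤ ∑ s : S, ∑ a : A, |ρ p t s a * f s a| :=
          Finset.sum_le_sum fun s _ => Finset.abs_sum_le_sum_abs _ _
      _ ≤ ∑ s : S, ∑ a : A, ρ p t s a * C := by
          refine Finset.sum_le_sum fun s _ => Finset.sum_le_sum fun a _ => ?_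
          rw [abs_mul, abs_of_nonneg (hnn p hpn t s a)]
          exact mul_le_mul_of_nonneg_left (hfC s a) (hnn p hpn t s a)
      _ = (∑ s : S, ∑ a : A, ρ p t s a) * C := by
          rw [Finset.sum_mul]
          exact Finset.sum_congr rfl fun s _ => (Finset.sum_mul ..).symm
      _ = C := by rw [hmass p hps t, one_mul]
  -- summability of discounted occupancy-weighted sums
  have hsum : ∀ (p : S → A → ℝ), (∀ s a, 0 ≤ p s a) → (∀ s, ∑ a : A, p s a = 1) →
      ∀ (f : S → A → ℝ),
      Summable (fun t : ℕ => γ ^ t * ∑ s : S, ∑ a : A, ρ p t s a * f s a) := by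
    intro p hpn hps f
    apply Summable.of_abs
    refine Summable.of_nonneg_of_le (fun t => abs_nonneg _) (fun t => ?_)
      (((summable_geometric_of_lt_one hγ0.le hγ1)).mul_right (∑ s : S, ∑ a : A, |f s a|))
    rw [abs_mul, abs_pow, abs_of_pos hγ0]
    exact mul_le_mul_of_nonneg_left (hbound p hpn hps f t) (pow_nonneg hγ0.le t)
  -- the key per-step identity
  have hstep : ∀ (p : S → A → ℝ), (∀ s, ∑ a : A, p s a = 1) → ∀ t : ℕ,
      ∑ s : S, ∑ a : A, ρ p t s a * R s a
        = (∑ s : S, ∑ a : A, ρ p t s a * (Q' s a - V' s))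
          + (∑ s : S, ∑ a : A, ρ p t s a * V' s)
          - γ * ∑ s : S, ∑ a : A, ρ p (t+1) s a * V' s := by
    intro p hp t
    have hnext : ∑ s' : S, ∑ a' : A, ρ p (t+1) s' a' * V' s'
        = ∑ s : S, ∑ a : A, ρ p t s a * ∑ s' : S, P s a s' * V' s' := by
      have h1 : ∀ s' : S, ∑ a' : A, ρ p (t+1) s' a' * V' s'
          = (∑ s : S, ∑ a : A, ρ p t s a * P s a s') * V' s' := by
        intro s'
        simp only [hρsucc]
        rw [← Finset.sum_mul, ← Finset.mul_sum, hp, mul_one]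
      calc ∑ s' : S, ∑ a' : A, ρ p (t+1) s' a' * V' s'
          = ∑ s' : S, ∑ s : S, ∑ a : A, ρ p t s a * P s a s' * V' s' := by
            refine Finset.sum_congr rfl fun s' _ => ?_
            rw [h1 s', Finset.sum_mul]
            exact Finset.sum_congr rfl fun s _ => Finset.sum_mul ..
        _ = ∑ s : S, ∑ a : A, ∑ s' : S, ρ p t s a * P s a s' * V' s' := by
            rw [Finset.sum_comm]
            exact Finset.sum_congr rfl fun s _ => Finset.sum_comm
        _ = ∑ s : S, ∑ a : A, ρ p t s a * ∑ s' : S, P s a s' * V' s' := by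
            refine Finset.sum_congr rfl fun s _ => Finset.sum_congr rfl fun a _ => ?_
            rw [Finset.mul_sum]
            exact Finset.sum_congr rfl fun s' _ => by ring
    rw [hnext]
    have hQR : ∀ s a, R s a = Q' s a - γ * ∑ s' : S, P s a s' * V' s' := by
      intro s a; rw [hQ' s a]; ring
    simp only [hQR, mul_sub, Finset.sum_sub_distrib, Finset.mul_sum, mul_left_comm]
    ring
  -- telescoping sum
  have htel : ∀ (p : S → A → ℝ), (∀ s a, 0 ≤ p s a) → (∀ s, ∑ a : A, p s a = 1) →
      ∑' t : ℕ, (γ ^ t * (∑ s : S, ∑ a : A, ρ p t s a * V' s)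
        - γ ^ (t+1) * (∑ s : S, ∑ a : A, ρ p (t+1) s a * V' s))
      = ∑ s : S, ∑ a : A, ρ p 0 s a * V' s := by
    intro p hpn hps
    set x : ℕ → ℝ := fun t => γ ^ t * ∑ s : S, ∑ a : A, ρ p t s a * V' s with hx
    have hxs : Summable x := hsum p hpn hps (fun s _ => V' s)
    have hxz : Filter.Tendsto x Filter.atTop (nhds 0) := hxs.tendsto_atTop_zero
    have hsf : Summable (fun t => x t - x (t+1)) :=
      hxs.sub ((summable_nat_add_iff 1).2 hxs)
    have : HasSum (fun t => x t - x (t+1)) (x 0) := by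
      rw [hsf.hasSum_iff_tendsto_nat]
      have : ∀ n : ℕ, ∑ t ∈ Finset.range n, (x t - x (t+1)) = x 0 - x n := by
        intro n; exact Finset.sum_range_sub' x n
      simp only [this]
      simpa using Filter.Tendsto.const_sub (x 0) hxz
    have h2 := this.tsum_eq
    simp only [hx, pow_zero, one_mul] at h2
    exact h2
  -- J in terms of advantages
  have hJsplit : ∀ (p : S → A → ℝ), (∀ s a, 0 ≤ p s a) → (∀ s, ∑ a : A, p s a = 1) →
      J p = (∑' t : ℕ, γ ^ t * ∑ s : S, ∑ a : A, ρ p t s a * (Q' s a - V' s))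
        + ∑ s : S, ∑ a : A, ρ p 0 s a * V' s := by
    intro p hpn hps
    rw [hJ p]
    have heq : ∀ t : ℕ, γ ^ t * ∑ s : S, ∑ a : A, ρ p t s a * R s a
        = γ ^ t * (∑ s : S, ∑ a : A, ρ p t s a * (Q' s a - V' s))
          + (γ ^ t * (∑ s : S, ∑ a : A, ρ p t s a * V' s)
            - γ ^ (t+1) * (∑ s : S, ∑ a : A, ρ p (t+1) s a * V' s)) := by
      intro t; rw [hstep p hps t]; ring
    rw [tsum_congr heq]
    rw [Summable.tsum_add (hsum p hpn hps (fun s a => Q' s a - V' s))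
      ((hsum p hpn hps (fun s _ => V' s)).sub
        ((summable_nat_add_iff 1).2 (hsum p hpn hps (fun s _ => V' s))))]
    rw [htel p hpn hps]
  -- zero advantage under π'
  have hzero : ∀ t : ℕ, ∑ s : S, ∑ a : A, ρ π' t s a * (Q' s a - V' s) = 0 := by
    have key : ∀ (m : S → ℝ), ∑ s : S, ∑ a : A, (m s * π' s a) * (Q' s a - V' s) = 0 := by
      intro m
      refine Finset.sum_eq_zero fun s _ => ?_
      have h1 : ∑ a : A, (m s * π' s a) * (Q' s a - V' s)
          = m s * ∑ a : A, (π' s a * Q' s a - π' s a * V' s) := by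
        rw [Finset.mul_sum]
        exact Finset.sum_congr rfl fun a _ => by ring
      rw [h1, Finset.sum_sub_distrib, ← hV' s, ← Finset.sum_mul, hπ'_sum, one_mul,
        sub_self, mul_zero]
    intro t
    cases t with
    | zero => simpa only [hρ0] using key d0
    | succ t => simpa only [hρsucc] using key (fun s' => ∑ s : S, ∑ a : A, ρ π' t s a * P s a s')
  -- same initial value term
  have hinit : ∀ (p : S → A → ℝ), (∀ s, ∑ a : A, p s a = 1) →
      ∑ s : S, ∑ a : A, ρ p 0 s a * V' s = ∑ s : S, d0 s * V' s := by
    intro p hps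
    refine Finset.sum_congr rfl fun s _ => ?_
    simp only [hρ0]
    calc ∑ a : A, d0 s * p s a * V' s = (d0 s * V' s) * ∑ a : A, p s a := by
          rw [Finset.mul_sum]
          exact Finset.sum_congr rfl fun a _ => by ring
      _ = d0 s * V' s := by rw [hps s, mul_one]
  have hzero' : ∀ t : ℕ, γ ^ t * ∑ s : S, ∑ a : A, ρ π' t s a * (Q' s a - V' s) = 0 := by
    intro t; rw [hzero t, mul_zero]
  rw [hJsplit π hπ_nonneg hπ_sum, hJsplit π' hπ'_nonneg hπ'_sum,
    hinit π hπ_sum, hinit π' hπ'_sum, tsum_congr hzero', tsum_zero]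
  ring
end
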